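/- arXiv:1605.06800 — 5 statements merged into one kernel-verified Lean document; each statement's English description precedes it below -/
import Mathlib

section
/- Assume the Ore setting and pairing data below, with star(s) ∈ S for every s ∈ S. Let x ∈ E², let y : M₂ → R be an R-linear functional, and let (s, z) and (s', z') be two witnesses for y. Suppose moreover that there exist r ∈ S and w ∈ M₂ with ∂ w = r • Φ(x). Then s⁻¹·star(z(Φ x)) = s'⁻¹·star(z'(Φ x)) in S⁻¹R; that is, the Blanchfield value of y at x does not depend on the choice of witness. -/
/-!
Applying a witness `(s, z)` to `w` gives `r * z (Φ x) = y w * star s`. Applying the involution and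
cancelling `s` on the left and `star r` on the right in `S⁻¹R` yields
`s⁻¹ * star (z (Φ x)) = star (y w) * (star r)⁻¹`, in which the witness no longer appears.
-/

theorem leftInv_mul_eq_mul_rightInv {M : Type*} [Monoid M] {a b t t' u u' : M}
    (h : a * t = u * b) (hu : u' * u = 1) (ht : t * t' = 1) : u' * a = b * t' :=
  calc u' * a = u' * (a * t) * t' := by rw [mul_assoc u', mul_assoc, ht, mul_one]
    _ = b * t' := by rw [h, ← mul_assoc, hu, one_mul]

section Witness

variable {R : Type*} [Ring R] [StarRing R] {M₁ M₂ : Type*} [AddCommGroup M₁] [AddCommGroup M₂]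
  [Module R M₁] [Module R M₂] {bd : M₂ →ₗ[R] M₁} {y : M₂ →ₗ[R] R} {z : M₁ →ₗ[R] R}
  {s r : R} {v : M₁} {w : M₂}

theorem star_apply_mul_star_eq_of_bd_eq_smul (hz : z (bd w) = y w * star s)
    (hw : bd w = r • v) : star (z v) * star r = s * star (y w) := by
  have h : r * z v = y w * star s := by rwa [hw, map_smul, smul_eq_mul] at hz
  simpa only [star_mul, star_star] using congrArg star h

theorem leftInv_mul_star_apply_eq_of_bd_eq_smul {A F : Type*} [Monoid A] [FunLike F R A]
    [MonoidHomClass F R A] (ι : F) (hz : z (bd w) = y w * star s) (hw : bd w = r • v)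
    {s' t' : A} (hs : s' * ι s = 1) (ht : ι (star r) * t' = 1) :
    s' * ι (star (z v)) = ι (star (y w)) * t' :=
  leftInv_mul_eq_mul_rightInv
    (by rw [← map_mul, ← map_mul, star_apply_mul_star_eq_of_bd_eq_smul hz hw]) hs ht

end Witness

theorem blanchfield_value_well_defined_general
    (R : Type*) [Ring R] [StarRing R] (S : Submonoid R)
    (hstarS : ∀ s ∈ S, star s ∈ S)
    (A : Type*) [Ring A] (ι : R →+* A)
    (inv : S → A)
    (hinv : ∀ s : S, inv s * ι s = 1) (hinv' : ∀ s : S, ι s * inv s = 1)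
    (E₂ M₁ M₂ : Type*) [AddCommGroup E₂] [AddCommGroup M₁] [AddCommGroup M₂]
    [Module R E₂] [Module R M₁] [Module R M₂]
    (bd : M₂ →ₗ[R] M₁) (Φ : E₂ →ₗ[R] M₁)
    (x : E₂) (y : M₂ →ₗ[R] R)
    (s s' : S) (z z' : M₁ →ₗ[R] R)
    (hz : ∀ m : M₂, z (bd m) = y m * star (s : R))
    (hz' : ∀ m : M₂, z' (bd m) = y m * star (s' : R))
    (r : S) (w : M₂) (hw : bd w = (r : R) • Φ x) :
    inv s * ι (star (z (Φ x))) = inv s' * ι (star (z' (Φ x))) := by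
  let t : S := ⟨star (r : R), hstarS r r.2⟩
  rw [leftInv_mul_star_apply_eq_of_bd_eq_smul ι (hz w) hw (hinv s) (hinv' t),
    leftInv_mul_star_apply_eq_of_bd_eq_smul ι (hz' w) hw (hinv s') (hinv' t)]

/-- In the Ore setting (ring with involution `R`, multiplicative submonoid
`S` of regular elements satisfying the left and right Ore conditions with `star S ⊆ S`, and
two-sided Ore localization `A = S⁻¹R` with injective numerator map `ι` under which every
`s ∈ S` becomes invertible, with inverse `inv s`), given `R`-linear maps `bd : M₂ → M₁` and
`Φ : E₂ → M₁`, a class `x ∈ E₂`, a functional `y : M₂ → R` with two witnesses `(s, z)` and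
`(s', z')` (i.e. `z (bd m) = y m * star s` and `z' (bd m) = y m * star s'` for all `m`),
and `r ∈ S`, `w ∈ M₂` with `bd w = r • Φ x`, the Blanchfield value of `y` at `x` does not
depend on the choice of witness: `s⁻¹ · star (z (Φ x)) = s'⁻¹ · star (z' (Φ x))` in `S⁻¹R`. -/
theorem blanchfield_value_well_defined
    (R : Type*) [Ring R] [StarRing R] (S : Submonoid R)
    (hreg : ∀ s ∈ S, IsRegular s)
    (horeL : ∀ (r : R) (s : S), ∃ (r' : R) (s' : S), (s' : R) * r = r' * (s : R))
    (horeR : ∀ (r : R) (s : S), ∃ (r' : R) (s' : S), r * (s' : R) = (s : R) * r')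
    (hstarS : ∀ s ∈ S, star s ∈ S)
    (A : Type*) [Ring A] (ι : R →+* A) (hι : Function.Injective ι)
    (inv : S → A)
    (hinv : ∀ s : S, inv s * ι s = 1) (hinv' : ∀ s : S, ι s * inv s = 1)
    (hfrac : ∀ a : A, ∃ (r : R) (s : S), a = inv s * ι r)
    (E₂ M₁ M₂ : Type*) [AddCommGroup E₂] [AddCommGroup M₁] [AddCommGroup M₂]
    [Module R E₂] [Module R M₁] [Module R M₂]
    (bd : M₂ →ₗ[R] M₁) (Φ : E₂ →ₗ[R] M₁)
    (x : E₂) (y : M₂ →ₗ[R] R)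
    (s s' : S) (z z' : M₁ →ₗ[R] R)
    (hz : ∀ m : M₂, z (bd m) = y m * star (s : R))
    (hz' : ∀ m : M₂, z' (bd m) = y m * star (s' : R))
    (r : S) (w : M₂) (hw : bd w = (r : R) • Φ x) :
    inv s * ι (star (z (Φ x))) = inv s' * ι (star (z' (Φ x))) :=
  blanchfield_value_well_defined_general R S hstarS A ι inv hinv hinv' E₂ M₁ M₂ bd Φ x y s s' z z'
    hz hz' r w hw
end

section
/- Assume the Ore setting and pairing data below. Let x ∈ E², let y : M₂ → R be an R-linear functional with witness (s, z), let u ∈ E¹ and let v : M₁ → R be an R-linear functional. Define x' := x + d(u), y' : m ↦ y(m) + v(∂ m), and z' : m ↦ z(m) + v(m)·star(s). Then (s, z') is a witness for y', and the difference s⁻¹·star(z'(Φ x')) − s⁻¹·star(z(Φ x)) lies in R (in fact it equals the image of star(y(Ψ u)) + star(v(Φ x')) in S⁻¹R); that is, the Blanchfield value is unchanged modulo R when the cocycle representatives are changed by coboundaries. -/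
/-! The change of cocycle representatives alters the numerator `z (Φ x)` by
`y (Ψ u) · star s + v (Φ x') · star s`, using `Φ ∘ d = ∂ ∘ Ψ` and the witness identity. After applying
the involution this becomes a left multiple of `s`, which the denominator `s⁻¹` cancels. -/

theorem witness_apply_map_add {R E₁ E₂ M₁ M₂ : Type*} [Ring R]
    [AddCommGroup E₁] [AddCommGroup E₂] [AddCommGroup M₁] [AddCommGroup M₂]
    [Module R E₁] [Module R E₂] [Module R M₁] [Module R M₂]
    {d : E₁ →ₗ[R] E₂} {bd : M₂ →ₗ[R] M₁} {Φ : E₂ →ₗ[R] M₁} {Ψ : E₁ →ₗ[R] M₂}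
    (hcompat : ∀ u : E₁, Φ (d u) = bd (Ψ u)) {y : M₂ →ₗ[R] R} {z : M₁ →ₗ[R] R} {t : R}
    (hz : ∀ m : M₂, z (bd m) = y m * t) (x : E₂) (u : E₁) :
    z (Φ (x + d u)) = z (Φ x) + y (Ψ u) * t := by
  rw [map_add, map_add, hcompat, hz]

theorem star_add_mul_star_add_mul_star {R : Type*} [Ring R] [StarRing R] (a b c s : R) :
    star (a + b * star s + c * star s) = star a + s * (star b + star c) := by
  rw [star_add, star_add, star_mul, star_mul, star_star, mul_add, add_assoc]

theorem mul_map_add_mul_sub_mul_map {R A : Type*} [Ring R] [Ring A] (ι : R →+* A) {s : R} {i : A}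
    (hi : i * ι s = 1) (r q : R) :
    i * ι (r + s * q) - i * ι r = ι q := by
  rw [map_add, mul_add, add_sub_cancel_left, map_mul, ← mul_assoc, hi, one_mul]

theorem blanchfield_value_coboundary_invariance_general
    (R : Type*) [Ring R] [StarRing R] (S : Submonoid R)
    (A : Type*) [Ring A] (ι : R →+* A)
    (inv : S → A)
    (hinv : ∀ s : S, inv s * ι s = 1)
    (E₁ E₂ M₁ M₂ : Type*)
    [AddCommGroup E₁] [AddCommGroup E₂] [AddCommGroup M₁] [AddCommGroup M₂]
    [Module R E₁] [Module R E₂] [Module R M₁] [Module R M₂]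
    (d : E₁ →ₗ[R] E₂) (bd : M₂ →ₗ[R] M₁) (Φ : E₂ →ₗ[R] M₁) (Ψ : E₁ →ₗ[R] M₂)
    (hcompat : ∀ u : E₁, Φ (d u) = bd (Ψ u))
    (x : E₂) (y : M₂ →ₗ[R] R) (s : S) (z : M₁ →ₗ[R] R)
    (hz : ∀ m : M₂, z (bd m) = y m * star (s : R))
    (u : E₁) (v : M₁ →ₗ[R] R) :
    (∀ m : M₂, z (bd m) + v (bd m) * star (s : R) = (y m + v (bd m)) * star (s : R))
    ∧ inv s * ι (star (z (Φ (x + d u)) + v (Φ (x + d u)) * star (s : R)))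
        - inv s * ι (star (z (Φ x)))
      = ι (star (y (Ψ u)) + star (v (Φ (x + d u)))) := by
  refine ⟨fun m => by rw [hz m, add_mul], ?_⟩
  rw [witness_apply_map_add hcompat hz, star_add_mul_star_add_mul_star]
  exact mul_map_add_mul_sub_mul_map ι (hinv s) _ _

/-- In the Ore setting (ring with involution `R`, multiplicative submonoid
`S` of regular elements satisfying the left and right Ore conditions, two-sided Ore
localization `A = S⁻¹R` with injective numerator map `ι`, inverses `inv s` of elements of
`S`), with `R`-linear maps `d : E¹ → E²`, `bd : M₂ → M₁`, `Φ : E² → M₁`, `Ψ : E¹ → M₂`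
satisfying `Φ ∘ d = bd ∘ Ψ`:  given `x ∈ E²`, a functional `y` with witness `(s, z)`,
`u ∈ E¹` and a functional `v : M₁ → R`, set `x' = x + d u`, `y' = y + v ∘ bd` and
`z' = z + v · star s`.  Then `(s, z')` is a witness for `y'`, and the difference of
Blanchfield values `s⁻¹·star (z' (Φ x')) − s⁻¹·star (z (Φ x))` equals the image in `S⁻¹R`
of `star (y (Ψ u)) + star (v (Φ x'))`, an element of `R`. -/
theorem blanchfield_value_coboundary_invariance
    (R : Type*) [Ring R] [StarRing R] (S : Submonoid R)
    (hreg : ∀ s ∈ S, IsRegular s)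
    (horeL : ∀ (r : R) (s : S), ∃ (r' : R) (s' : S), (s' : R) * r = r' * (s : R))
    (horeR : ∀ (r : R) (s : S), ∃ (r' : R) (s' : S), r * (s' : R) = (s : R) * r')
    (A : Type*) [Ring A] (ι : R →+* A) (hι : Function.Injective ι)
    (inv : S → A)
    (hinv : ∀ s : S, inv s * ι s = 1) (hinv' : ∀ s : S, ι s * inv s = 1)
    (hfrac : ∀ a : A, ∃ (r : R) (s : S), a = inv s * ι r)
    (E₁ E₂ M₁ M₂ : Type*)
    [AddCommGroup E₁] [AddCommGroup E₂] [AddCommGroup M₁] [AddCommGroup M₂]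
    [Module R E₁] [Module R E₂] [Module R M₁] [Module R M₂]
    (d : E₁ →ₗ[R] E₂) (bd : M₂ →ₗ[R] M₁) (Φ : E₂ →ₗ[R] M₁) (Ψ : E₁ →ₗ[R] M₂)
    (hcompat : ∀ u : E₁, Φ (d u) = bd (Ψ u))
    (x : E₂) (y : M₂ →ₗ[R] R) (s : S) (z : M₁ →ₗ[R] R)
    (hz : ∀ m : M₂, z (bd m) = y m * star (s : R))
    (u : E₁) (v : M₁ →ₗ[R] R) :
    (∀ m : M₂, z (bd m) + v (bd m) * star (s : R) = (y m + v (bd m)) * star (s : R))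
    ∧ inv s * ι (star (z (Φ (x + d u)) + v (Φ (x + d u)) * star (s : R)))
        - inv s * ι (star (z (Φ x)))
      = ι (star (y (Ψ u)) + star (v (Φ (x + d u)))) :=
  blanchfield_value_coboundary_invariance_general R S A ι inv hinv E₁ E₂ M₁ M₂ d bd Φ Ψ hcompat x y
    s z hz u v
end

section
/- Assume the Ore setting and pairing data below. Let x ∈ E², let y : M₂ → R be an R-linear functional with witness (s, z), let p, q ∈ R, and let q' ∈ R and s' ∈ S satisfy q'·s = s'·q (such q', s' exist by the Ore condition). Define q·y : m ↦ y(m)·star(q) and q'·z : m ↦ z(m)·star(q'). Then (s', q'·z) is a witness for q·y, and in S⁻¹R one has the exact sesquilinearity identity: s'⁻¹·star((q'·z)(Φ(p • x))) = q · ( s⁻¹·star(z(Φ x)) ) · star(p). -/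
/-!
Since `q' s = s' q` in `R`, the fractions `s'⁻¹ q'` and `q s⁻¹` agree in `S⁻¹R`. By linearity
`star (z (Φ (p • x)) * star q') = q' * star (z (Φ x)) * star p`, so the left-hand side is
`s'⁻¹ q' · star (z (Φ x)) · star p`, and replacing `s'⁻¹ q'` by `q s⁻¹` gives the right-hand side.
-/

theorem mul_eq_mul_of_mul_eq_mul_of_leftInverse_rightInverse {M : Type*} [Monoid M]
    {a b c d u v : M} (hu : u * c = 1) (hv : d * v = 1) (h : b * d = c * a) :
    u * b = a * v :=
  calc u * b = u * (b * d) * v := by rw [mul_assoc u, mul_assoc b, hv, mul_one]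
    _ = a * v := by rw [h, ← mul_assoc, hu, one_mul]

theorem blanchfield_value_sesquilinear_general
    (R : Type*) [Ring R] [StarRing R] (S : Submonoid R)
    (A : Type*) [Ring A] (ι : R →+* A)
    (inv : S → A)
    (hinv : ∀ s : S, inv s * ι s = 1) (hinv' : ∀ s : S, ι s * inv s = 1)
    (E₂ M₁ M₂ : Type*) [AddCommGroup E₂] [AddCommGroup M₁] [AddCommGroup M₂]
    [Module R E₂] [Module R M₁] [Module R M₂]
    (bd : M₂ →ₗ[R] M₁) (Φ : E₂ →ₗ[R] M₁)
    (x : E₂) (y : M₂ →ₗ[R] R) (s : S) (z : M₁ →ₗ[R] R)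
    (hz : ∀ m : M₂, z (bd m) = y m * star (s : R))
    (p q : R) (q' : R) (s' : S) (hore : q' * (s : R) = (s' : R) * q) :
    (∀ m : M₂, z (bd m) * star q' = (y m * star q) * star (s' : R))
    ∧ inv s' * ι (star (z (Φ (p • x)) * star q'))
      = ι q * (inv s * ι (star (z (Φ x)))) * ι (star p) := by
  have hfrac : inv s' * ι q' = ι q * inv s :=
    mul_eq_mul_of_mul_eq_mul_of_leftInverse_rightInverse (hinv s') (hinv' s)
      (by rw [← map_mul, ← map_mul, hore])
  refine ⟨fun m => ?_, ?_⟩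
  · rw [hz m, mul_assoc, mul_assoc, ← star_mul, ← star_mul, hore]
  · rw [map_smul, map_smul, smul_eq_mul, star_mul, star_mul, star_star, map_mul, map_mul,
      ← mul_assoc, ← mul_assoc, hfrac]
    simp only [mul_assoc]

/-- In the Ore setting (ring with involution `R`, multiplicative submonoid
`S` of regular elements satisfying the left and right Ore conditions, two-sided Ore
localization `A = S⁻¹R` with injective numerator map `ι`, inverses `inv s` of elements of
`S`), with `R`-linear maps `bd : M₂ → M₁` and `Φ : E² → M₁`:  given `x ∈ E²`, a functional
`y` with witness `(s, z)`, elements `p, q ∈ R`, and `q' ∈ R`, `s' ∈ S` with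
`q' * s = s' * q`, the functional `q·y : m ↦ y m * star q` has witness `(s', q'·z)` where
`(q'·z) m = z m * star q'`, and the exact sesquilinearity identity holds in `S⁻¹R`:
`s'⁻¹ · star ((q'·z) (Φ (p • x))) = q · (s⁻¹ · star (z (Φ x))) · star p`. -/
theorem blanchfield_value_sesquilinear
    (R : Type*) [Ring R] [StarRing R] (S : Submonoid R)
    (hreg : ∀ s ∈ S, IsRegular s)
    (horeL : ∀ (r : R) (s : S), ∃ (r' : R) (s' : S), (s' : R) * r = r' * (s : R))
    (horeR : ∀ (r : R) (s : S), ∃ (r' : R) (s' : S), r * (s' : R) = (s : R) * r')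
    (A : Type*) [Ring A] (ι : R →+* A) (hι : Function.Injective ι)
    (inv : S → A)
    (hinv : ∀ s : S, inv s * ι s = 1) (hinv' : ∀ s : S, ι s * inv s = 1)
    (hfrac : ∀ a : A, ∃ (r : R) (s : S), a = inv s * ι r)
    (E₂ M₁ M₂ : Type*) [AddCommGroup E₂] [AddCommGroup M₁] [AddCommGroup M₂]
    [Module R E₂] [Module R M₁] [Module R M₂]
    (bd : M₂ →ₗ[R] M₁) (Φ : E₂ →ₗ[R] M₁)
    (x : E₂) (y : M₂ →ₗ[R] R) (s : S) (z : M₁ →ₗ[R] R)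
    (hz : ∀ m : M₂, z (bd m) = y m * star (s : R))
    (p q : R) (q' : R) (s' : S) (hore : q' * (s : R) = (s' : R) * q) :
    (∀ m : M₂, z (bd m) * star q' = (y m * star q) * star (s' : R))
    ∧ inv s' * ι (star (z (Φ (p • x)) * star q'))
      = ι q * (inv s * ι (star (z (Φ x)))) * ι (star p) :=
  blanchfield_value_sesquilinear_general R S A ι inv hinv hinv' E₂ M₁ M₂ bd Φ x y s z hz p q q' s'
    hore
end

section
/- Assume the hermitian setting below. Let x be a cocycle on M₂ and let y be an R-linear functional on M₂ with witness (s, z). Then s⁻¹·star(z(Φ x)) − s⁻¹·star(z(Φ' x)) lies in R; in fact this difference equals the image of star(y(H x)) under the embedding R → S⁻¹R. In particular, modulo R the Blanchfield value of y at x may be computed using Φ' in place of Φ. -/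
/-! The difference `z (Φ x) - z (Φ' x)` is `z (∂₂ (H x)) = y (H x) · star s`, so after applying
`star` the factor `s` moves to the left, where it cancels against `s⁻¹`. -/

theorem star_apply_bd_eq_mul_star_of_witness {R M₁ M₂ : Type*} [Ring R] [StarRing R]
    [AddCommGroup M₁] [AddCommGroup M₂] [Module R M₁] [Module R M₂]
    {bd₂ : M₂ →ₗ[R] M₁} {y : M₂ →ₗ[R] R} {z : M₁ →ₗ[R] R} {s : R}
    (hz : ∀ m : M₂, z (bd₂ m) = y m * star s) (m : M₂) :
    star (z (bd₂ m)) = s * star (y m) := by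
  rw [hz, star_mul, star_star]

theorem RingHom.mul_map_mul_eq_of_mul_map_eq_one {R A : Type*} [Semiring R] [Semiring A]
    (ι : R →+* A) {u : A} {s : R} (hu : u * ι s = 1) (r : R) :
    u * ι (s * r) = ι r := by
  rw [map_mul, ← mul_assoc, hu, one_mul]

theorem blanchfield_value_phi_vs_phi'_general
    (R : Type*) [Ring R] [StarRing R] (S : Submonoid R)
    (A : Type*) [Ring A] (ι : R →+* A)
    (inv : S → A)
    (hinv : ∀ s : S, inv s * ι s = 1)
    (M₁ M₂ M₃ : Type*) [AddCommGroup M₁] [AddCommGroup M₂] [AddCommGroup M₃]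
    [Module R M₁] [Module R M₂] [Module R M₃]
    (bd₂ : M₂ →ₗ[R] M₁) (bd₃ : M₃ →ₗ[R] M₂)
    (Φ Φ' : (M₂ →ₗ[R] R) → M₁) (H : (M₂ →ₗ[R] R) → M₂)
    (hdiff : ∀ x : M₂ →ₗ[R] R, (∀ m : M₃, x (bd₃ m) = 0) → Φ x - Φ' x = bd₂ (H x))
    (x : M₂ →ₗ[R] R) (hx : ∀ m : M₃, x (bd₃ m) = 0)
    (y : M₂ →ₗ[R] R) (s : S) (z : M₁ →ₗ[R] R)
    (hz : ∀ m : M₂, z (bd₂ m) = y m * star (s : R)) :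
    inv s * ι (star (z (Φ x))) - inv s * ι (star (z (Φ' x)))
      = ι (star (y (H x))) := by
  have hcob : z (Φ x) - z (Φ' x) = z (bd₂ (H x)) := by rw [← map_sub, hdiff x hx]
  rw [← mul_sub, ← map_sub, ← star_sub, hcob, star_apply_bd_eq_mul_star_of_witness hz,
    ι.mul_map_mul_eq_of_mul_map_eq_one (hinv s)]

/-- In the hermitian setting (ring with involution `R`, multiplicative
submonoid `S` of regular elements satisfying the left and right Ore conditions, two-sided
Ore localization `A = S⁻¹R` with injective numerator map `ι`, inverses `inv s` of elements
of `S`; left `R`-modules `M₁, M₂, M₃` with `R`-linear maps `bd₂ : M₂ → M₁`,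
`bd₃ : M₃ → M₂`; additive maps `Φ, Φ' : Hom_R(M₂,R) → M₁` and `H : Hom_R(M₂,R) → M₂` with
`Φ x − Φ' x = bd₂ (H x)` for every cocycle `x`):  for a cocycle `x` and a functional `y`
with witness `(s, z)`, the difference `s⁻¹·star (z (Φ x)) − s⁻¹·star (z (Φ' x))` equals
the image of `star (y (H x))` under `ι`; in particular it lies in `R`, so modulo `R` the
Blanchfield value of `y` at `x` may be computed using `Φ'` in place of `Φ`. -/
theorem blanchfield_value_phi_vs_phi'
    (R : Type*) [Ring R] [StarRing R] (S : Submonoid R)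
    (hreg : ∀ s ∈ S, IsRegular s)
    (horeL : ∀ (r : R) (s : S), ∃ (r' : R) (s' : S), (s' : R) * r = r' * (s : R))
    (horeR : ∀ (r : R) (s : S), ∃ (r' : R) (s' : S), r * (s' : R) = (s : R) * r')
    (A : Type*) [Ring A] (ι : R →+* A) (hι : Function.Injective ι)
    (inv : S → A)
    (hinv : ∀ s : S, inv s * ι s = 1) (hinv' : ∀ s : S, ι s * inv s = 1)
    (hfrac : ∀ a : A, ∃ (r : R) (s : S), a = inv s * ι r)
    (M₁ M₂ M₃ : Type*) [AddCommGroup M₁] [AddCommGroup M₂] [AddCommGroup M₃]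
    [Module R M₁] [Module R M₂] [Module R M₃]
    (bd₂ : M₂ →ₗ[R] M₁) (bd₃ : M₃ →ₗ[R] M₂)
    (Φ Φ' : (M₂ →ₗ[R] R) → M₁) (H : (M₂ →ₗ[R] R) → M₂)
    (hΦadd : ∀ a b : M₂ →ₗ[R] R, Φ (a + b) = Φ a + Φ b)
    (hΦ'add : ∀ a b : M₂ →ₗ[R] R, Φ' (a + b) = Φ' a + Φ' b)
    (hHadd : ∀ a b : M₂ →ₗ[R] R, H (a + b) = H a + H b)
    (hdiff : ∀ x : M₂ →ₗ[R] R, (∀ m : M₃, x (bd₃ m) = 0) → Φ x - Φ' x = bd₂ (H x))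
    (x : M₂ →ₗ[R] R) (hx : ∀ m : M₃, x (bd₃ m) = 0)
    (y : M₂ →ₗ[R] R) (s : S) (z : M₁ →ₗ[R] R)
    (hz : ∀ m : M₂, z (bd₂ m) = y m * star (s : R)) :
    inv s * ι (star (z (Φ x))) - inv s * ι (star (z (Φ' x)))
      = ι (star (y (H x))) :=
  blanchfield_value_phi_vs_phi'_general R S A ι inv hinv M₁ M₂ M₃ bd₂ bd₃ Φ Φ' H hdiff x hx y s z hz
end

section
/- Assume the hermitian setting below, with star(s) ∈ S for every s ∈ S. Let x and y be cocycles on M₂, let (r, w) be a witness for x and (s, z) a witness for y. Then s⁻¹·star(z(Φ x)) − w(Φ y)·(star(r))⁻¹ lies in R. Interpreting s⁻¹·star(z(Φ x)) modulo R as the Blanchfield pairing Bl(y, x) ∈ S⁻¹R/R, this says that Bl(y, x) = star(Bl(x, y)), i.e. the twisted Blanchfield pairing is hermitian. -/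
/-!
If `(s, z)` is a witness for `y`, then `z ∘ bd₂ = s·y`, so (ii) gives `bd₂ (Ψ z) = s • Φ' y`.
Evaluating the witness `(r, w)` of `x` on `Ψ z` and using (iii) to replace `Φ' y` by
`Φ y - bd₂ (H y)` yields, in `R`,
`x (Ψ z) * star r = s * (w (Φ y) - x (H y) * star r)`,
while (i) gives `star (z (Φ x)) = x (Ψ z)`. Dividing by `s` on the left and by `star r` on the
right in `S⁻¹R` shows that the difference of the two fractions is `-x (H y) ∈ R`.
-/

/-- The left `R`-module structure on the dual `Hom_R(M, R)` of a left `R`-module `M`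
over a ring with involution, given by `(r·f)(m) = f(m) * star r`. -/
def rsmul {R M : Type*} [Ring R] [StarRing R] [AddCommGroup M] [Module R M]
    (r : R) (f : M →ₗ[R] R) : M →ₗ[R] R where
  toFun m := f m * star r
  map_add' x y := by simp [add_mul]
  map_smul' c x := by simp [mul_assoc]

theorem comp_eq_rsmul_iff {R M N : Type*} [Ring R] [StarRing R] [AddCommGroup M]
    [AddCommGroup N] [Module R M] [Module R N] (z : N →ₗ[R] R) (f : M →ₗ[R] N) (s : R)
    (y : M →ₗ[R] R) : z ∘ₗ f = rsmul s y ↔ ∀ m, z (f m) = y m * star s :=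
  LinearMap.ext_iff

theorem leftInv_mul_sub_mul_rightInv {A : Type*} [Ring A] {σ σ' τ τ' a b c : A}
    (hσ : σ' * σ = 1) (hτ : τ * τ' = 1) (h : a * τ = σ * (b - c * τ)) :
    σ' * a - b * τ' = -c := by
  have : σ' * a = (b - c * τ) * τ' :=
    calc σ' * a = σ' * (a * τ) * τ' := by rw [mul_assoc, mul_assoc, hτ, mul_one]
      _ = (b - c * τ) * τ' := by rw [h, ← mul_assoc, hσ, one_mul]
  rw [this, sub_mul, mul_assoc, hτ, mul_one]
  abel

section BlanchfieldPairing

variable {R M₁ M₂ M₃ : Type*} [Ring R] [StarRing R]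
  [AddCommGroup M₁] [AddCommGroup M₂] [AddCommGroup M₃]
  [Module R M₁] [Module R M₂] [Module R M₃]
  {bd₂ : M₂ →ₗ[R] M₁} {bd₃ : M₃ →ₗ[R] M₂}
  {Φ Φ' : (M₂ →ₗ[R] R) → M₁} {Ψ : (M₁ →ₗ[R] R) → M₂} {H : (M₂ →ₗ[R] R) → M₂}

theorem bd₂_Ψ_eq_smul_Φ' (hΦ'smul : ∀ (r : R) (v : M₂ →ₗ[R] R), Φ' (rsmul r v) = r • Φ' v)
    (hΦ'bd : ∀ w : M₁ →ₗ[R] R, Φ' (w ∘ₗ bd₂) = bd₂ (Ψ w))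
    {y : M₂ →ₗ[R] R} {s : R} {z : M₁ →ₗ[R] R}
    (hz : ∀ m : M₂, z (bd₂ m) = y m * star s) :
    bd₂ (Ψ z) = s • Φ' y := by
  rw [← hΦ'bd, (comp_eq_rsmul_iff z bd₂ s y).mpr hz, hΦ'smul]

theorem apply_Ψ_mul_star_eq (hΦ'smul : ∀ (r : R) (v : M₂ →ₗ[R] R), Φ' (rsmul r v) = r • Φ' v)
    (hΦ'bd : ∀ w : M₁ →ₗ[R] R, Φ' (w ∘ₗ bd₂) = bd₂ (Ψ w))
    (hdiff : ∀ x : M₂ →ₗ[R] R, (∀ m : M₃, x (bd₃ m) = 0) → Φ x - Φ' x = bd₂ (H x))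
    {x y : M₂ →ₗ[R] R} (hy : ∀ m : M₃, y (bd₃ m) = 0) {r s : R} {w z : M₁ →ₗ[R] R}
    (hw : ∀ m : M₂, w (bd₂ m) = x m * star r) (hz : ∀ m : M₂, z (bd₂ m) = y m * star s) :
    x (Ψ z) * star r = s * (w (Φ y) - x (H y) * star r) := by
  have hΦ'y : Φ' y = Φ y - bd₂ (H y) := by rw [← hdiff y hy, sub_sub_cancel]
  rw [← hw, bd₂_Ψ_eq_smul_Φ' hΦ'smul hΦ'bd hz, map_smul, hΦ'y, map_sub, hw, smul_eq_mul]

end BlanchfieldPairing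

theorem blanchfield_pairing_hermitian_general
    (R : Type*) [Ring R] [StarRing R] (S : Submonoid R)
    (hstarS : ∀ s ∈ S, star s ∈ S)
    (A : Type*) [Ring A] (ι : R →+* A)
    (inv : S → A)
    (hinv : ∀ s : S, inv s * ι s = 1) (hinv' : ∀ s : S, ι s * inv s = 1)
    (M₁ M₂ M₃ : Type*) [AddCommGroup M₁] [AddCommGroup M₂] [AddCommGroup M₃]
    [Module R M₁] [Module R M₂] [Module R M₃]
    (bd₂ : M₂ →ₗ[R] M₁) (bd₃ : M₃ →ₗ[R] M₂)
    (Φ Φ' : (M₂ →ₗ[R] R) → M₁) (Ψ : (M₁ →ₗ[R] R) → M₂) (H : (M₂ →ₗ[R] R) → M₂)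
    (hΦ'smul : ∀ (r : R) (v : M₂ →ₗ[R] R), Φ' (rsmul r v) = r • Φ' v)
    (hΨ : ∀ (w : M₁ →ₗ[R] R) (v : M₂ →ₗ[R] R), star (v (Ψ w)) = w (Φ v))
    (hΦ'bd : ∀ w : M₁ →ₗ[R] R, Φ' (w ∘ₗ bd₂) = bd₂ (Ψ w))
    (hdiff : ∀ x : M₂ →ₗ[R] R, (∀ m : M₃, x (bd₃ m) = 0) → Φ x - Φ' x = bd₂ (H x))
    (x y : M₂ →ₗ[R] R)
    (hy : ∀ m : M₃, y (bd₃ m) = 0)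
    (r s : S) (w z : M₁ →ₗ[R] R)
    (hw : ∀ m : M₂, w (bd₂ m) = x m * star (r : R))
    (hz : ∀ m : M₂, z (bd₂ m) = y m * star (s : R)) :
    inv s * ι (star (z (Φ x))) - ι (w (Φ y)) * inv ⟨star (r : R), hstarS (r : R) r.2⟩
      ∈ Set.range ι := by
  have hstar : star (z (Φ x)) = x (Ψ z) := by rw [← hΨ, star_star]
  have key := congrArg ι (apply_Ψ_mul_star_eq hΦ'smul hΦ'bd hdiff hy hw hz)
  simp only [map_mul, map_sub] at key
  refine ⟨-(x (H y)), ?_⟩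
  rw [map_neg, hstar,
    leftInv_mul_sub_mul_rightInv (hinv s) (hinv' ⟨star (r : R), hstarS (r : R) r.2⟩) key]

/-- In the hermitian setting (ring with involution `R`, multiplicative
submonoid `S` of regular elements with `star S ⊆ S` satisfying the left and right Ore
conditions, two-sided Ore localization `A = S⁻¹R` with injective numerator map `ι`,
inverses `inv s` of elements of `S`; left `R`-modules `M₁, M₂, M₃` with `R`-linear maps
`bd₂ : M₂ → M₁`, `bd₃ : M₃ → M₂`; additive maps `Φ, Φ' : Hom_R(M₂,R) → M₁` satisfying
`Φ (r·x) = r • Φ x` and `Φ' (r·x) = r • Φ' x`, and maps `Ψ : Hom_R(M₁,R) → M₂`,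
`H : Hom_R(M₂,R) → M₂` with (i) `star (v (Ψ w)) = w (Φ v)`, (ii) `Φ' (w ∘ bd₂) = bd₂ (Ψ w)`,
(iii) `Φ x − Φ' x = bd₂ (H x)` for every cocycle `x`):  for cocycles `x, y` with witnesses
`(r, w)` for `x` and `(s, z)` for `y`, the element
`s⁻¹·star (z (Φ x)) − w (Φ y)·(star r)⁻¹` of `S⁻¹R` lies in `R`; i.e. the twisted
Blanchfield pairing is hermitian: `Bl(y,x) = star (Bl(x,y))` in `S⁻¹R/R`. -/
theorem blanchfield_pairing_hermitian
    (R : Type*) [Ring R] [StarRing R] (S : Submonoid R)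
    (hreg : ∀ s ∈ S, IsRegular s)
    (horeL : ∀ (r : R) (s : S), ∃ (r' : R) (s' : S), (s' : R) * r = r' * (s : R))
    (horeR : ∀ (r : R) (s : S), ∃ (r' : R) (s' : S), r * (s' : R) = (s : R) * r')
    (hstarS : ∀ s ∈ S, star s ∈ S)
    (A : Type*) [Ring A] (ι : R →+* A) (hι : Function.Injective ι)
    (inv : S → A)
    (hinv : ∀ s : S, inv s * ι s = 1) (hinv' : ∀ s : S, ι s * inv s = 1)
    (hfrac : ∀ a : A, ∃ (r : R) (s : S), a = inv s * ι r)
    (M₁ M₂ M₃ : Type*) [AddCommGroup M₁] [AddCommGroup M₂] [AddCommGroup M₃]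
    [Module R M₁] [Module R M₂] [Module R M₃]
    (bd₂ : M₂ →ₗ[R] M₁) (bd₃ : M₃ →ₗ[R] M₂)
    (Φ Φ' : (M₂ →ₗ[R] R) → M₁) (Ψ : (M₁ →ₗ[R] R) → M₂) (H : (M₂ →ₗ[R] R) → M₂)
    (hΦadd : ∀ a b : M₂ →ₗ[R] R, Φ (a + b) = Φ a + Φ b)
    (hΦ'add : ∀ a b : M₂ →ₗ[R] R, Φ' (a + b) = Φ' a + Φ' b)
    (hΦsmul : ∀ (r : R) (v : M₂ →ₗ[R] R), Φ (rsmul r v) = r • Φ v)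
    (hΦ'smul : ∀ (r : R) (v : M₂ →ₗ[R] R), Φ' (rsmul r v) = r • Φ' v)
    (hΨ : ∀ (w : M₁ →ₗ[R] R) (v : M₂ →ₗ[R] R), star (v (Ψ w)) = w (Φ v))
    (hΦ'bd : ∀ w : M₁ →ₗ[R] R, Φ' (w ∘ₗ bd₂) = bd₂ (Ψ w))
    (hdiff : ∀ x : M₂ →ₗ[R] R, (∀ m : M₃, x (bd₃ m) = 0) → Φ x - Φ' x = bd₂ (H x))
    (x y : M₂ →ₗ[R] R)
    (hx : ∀ m : M₃, x (bd₃ m) = 0) (hy : ∀ m : M₃, y (bd₃ m) = 0)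
    (r s : S) (w z : M₁ →ₗ[R] R)
    (hw : ∀ m : M₂, w (bd₂ m) = x m * star (r : R))
    (hz : ∀ m : M₂, z (bd₂ m) = y m * star (s : R)) :
    inv s * ι (star (z (Φ x))) - ι (w (Φ y)) * inv ⟨star (r : R), hstarS (r : R) r.2⟩
      ∈ Set.range ι :=
  blanchfield_pairing_hermitian_general R S hstarS A ι inv hinv hinv' M₁ M₂ M₃ bd₂ bd₃ Φ Φ' Ψ H
    hΦ'smul hΨ hΦ'bd hdiff x y hy r s w z hw hz
end
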